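/- arXiv:2506.20025 — 9 statements merged into one kernel-verified Lean document; each statement's English description precedes it below -/
import Mathlib

section
/- Let f : ℝ → ℝ be convex. Then for every x ∈ ℝ and λ > 0 the Moreau envelope M_f(x; λ) := ⨅_{v ∈ ℝ} (f(v) + (v − x)²/(2λ)) is finite (strictly greater than −∞), and the function (x, λ) ↦ M_f(x; λ) is jointly convex on ℝ × (0, ∞). -/
/-- The Moreau envelope of `f` with parameter `λ`. -/
noncomputable def moreau (f : ℝ → ℝ) (x lam : ℝ) : ℝ :=
  ⨅ v : ℝ, (f v + (v - x) ^ 2 / (2 * lam))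

/-- Affine minorant estimates for a convex function on ℝ. -/
lemma convex_minorant (f : ℝ → ℝ) (hf : ConvexOn ℝ Set.univ f) (v : ℝ) :
    (v ≤ 0 → f 0 + (f 1 - f 0) * v ≤ f v) ∧
    (0 ≤ v → f 0 + (f 0 - f (-1)) * v ≤ f v) := by
  constructor
  · intro hv
    rcases eq_or_lt_of_le hv with h | h
    · simp [h]
    · have := hf.slope_mono_adjacent (Set.mem_univ v) (Set.mem_univ 1) h one_pos
      rw [div_le_div_iff₀ (by linarith) (by linarith)] at this
      nlinarith
  · intro hv
    rcases eq_or_lt_of_le hv with h | h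
    · simp [← h]
    · have := hf.slope_mono_adjacent (Set.mem_univ (-1)) (Set.mem_univ v)
        (by norm_num) h
      rw [div_le_div_iff₀ (by linarith) (by linarith)] at this
      nlinarith

/-- Quadratic lower bound. -/
lemma quad_bound (x lam c v : ℝ) (hlam : 0 < lam) :
    -x ^ 2 / (2 * lam) - lam * c ^ 2 ≤ c * v + (v - x) ^ 2 / (2 * lam) := by
  have h : ((v - x + lam * c) ^ 2 + (x + lam * c) ^ 2) / (2 * lam)
      = c * v + (v - x) ^ 2 / (2 * lam) + x ^ 2 / (2 * lam) + lam * c ^ 2 := by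
    field_simp
    ring
  have hpos : 0 ≤ ((v - x + lam * c) ^ 2 + (x + lam * c) ^ 2) / (2 * lam) := by positivity
  rw [h] at hpos
  rw [neg_div]
  linarith

lemma moreau_bddBelow (f : ℝ → ℝ) (hf : ConvexOn ℝ Set.univ f) (x lam : ℝ) (hlam : 0 < lam) :
    BddBelow (Set.range fun v : ℝ => f v + (v - x) ^ 2 / (2 * lam)) := by
  set a := f 1 - f 0 with ha
  set b := f 0 - f (-1) with hb
  refine ⟨f 0 + (-x ^ 2 / (2 * lam) - lam * a ^ 2) + (-lam * b ^ 2), ?_⟩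
  rintro _ ⟨v, rfl⟩
  have hm := convex_minorant f hf v
  rcases le_total v 0 with hv | hv
  · have h1 := hm.1 hv
    have h2 := quad_bound x lam a v hlam
    have h3 : 0 ≤ lam * b ^ 2 := by positivity
    simp only
    nlinarith
  · have h1 := hm.2 hv
    have h2 := quad_bound x lam b v hlam
    have h3 : 0 ≤ lam * a ^ 2 := by positivity
    simp only
    nlinarith

/-- For convex `f : ℝ → ℝ`, the Moreau envelope is finite (the infimand is bounded
below, i.e. the infimum is `> -∞`) and jointly convex on `ℝ × (0, ∞)`. -/
theorem moreau_finite_and_jointly_convex (f : ℝ → ℝ) (hf : ConvexOn ℝ Set.univ f) :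
    (∀ x : ℝ, ∀ lam : ℝ, 0 < lam →
      BddBelow (Set.range fun v : ℝ => f v + (v - x) ^ 2 / (2 * lam))) ∧
    ConvexOn ℝ {p : ℝ × ℝ | 0 < p.2} (fun p : ℝ × ℝ => moreau f p.1 p.2) := by
  refine ⟨fun x lam hlam => moreau_bddBelow f hf x lam hlam, ?_, ?_⟩
  · exact (convex_Ioi (0:ℝ)).linear_preimage (LinearMap.snd ℝ ℝ ℝ)
  · rintro ⟨x, lam⟩ hp ⟨y, mu⟩ hq t s ht hs hts
    simp only [Set.mem_setOf_eq] at hp hq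
    have hΛ : 0 < t * lam + s * mu := by
      rcases eq_or_lt_of_le ht with h | h
      · have : s = 1 := by linarith
        simp [← h, this]; linarith
      · nlinarith
    simp only [Prod.smul_mk, Prod.mk_add_mk, smul_eq_mul]
    -- goal : moreau f (t*x + s*y) (t*lam + s*mu) ≤ t * moreau f x lam + s * moreau f y mu
    refine le_of_forall_pos_le_add fun ε hε => ?_
    have h1 : moreau f x lam < moreau f x lam + ε / 2 := by linarith
    have h2 : moreau f y mu < moreau f y mu + ε / 2 := by linarith
    obtain ⟨v, hv⟩ := exists_lt_of_ciInf_lt (h1.trans_le (le_refl _))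
    obtain ⟨w, hw⟩ := exists_lt_of_ciInf_lt (h2.trans_le (le_refl _))
    have hu : moreau f (t * x + s * y) (t * lam + s * mu)
        ≤ f (t * v + s * w) + (t * v + s * w - (t * x + s * y)) ^ 2 / (2 * (t * lam + s * mu)) :=
      ciInf_le (moreau_bddBelow f hf _ _ hΛ) (t * v + s * w)
    have hcf : f (t * v + s * w) ≤ t * f v + s * f w := by
      have := hf.2 (Set.mem_univ v) (Set.mem_univ w) ht hs hts
      simpa using this
    -- perspective inequality
    set A := v - x with hA
    set B := w - y with hB
    have key : (t * A + s * B) ^ 2 / (2 * (t * lam + s * mu))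
        ≤ t * (A ^ 2 / (2 * lam)) + s * (B ^ 2 / (2 * mu)) := by
      have hrhs : t * (A ^ 2 / (2 * lam)) + s * (B ^ 2 / (2 * mu))
          = (t * A ^ 2 * (2 * mu) + s * B ^ 2 * (2 * lam)) / (2 * lam * (2 * mu)) := by
        field_simp
      rw [hrhs, div_le_div_iff₀ (by positivity) (by positivity)]
      nlinarith [mul_nonneg (mul_nonneg ht hs) (sq_nonneg (lam * B - mu * A))]
    have heq : t * v + s * w - (t * x + s * y) = t * A + s * B := by
      simp [hA, hB]; ring
    rw [heq] at hu
    calc moreau f (t * x + s * y) (t * lam + s * mu)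
        ≤ f (t * v + s * w) + (t * A + s * B) ^ 2 / (2 * (t * lam + s * mu)) := hu
      _ ≤ t * f v + s * f w + (t * (A ^ 2 / (2 * lam)) + s * (B ^ 2 / (2 * mu))) := by linarith
      _ = t * (f v + A ^ 2 / (2 * lam)) + s * (f w + B ^ 2 / (2 * mu)) := by ring
      _ ≤ t * (moreau f x lam + ε / 2) + s * (moreau f y mu + ε / 2) := by
          have h3 := mul_le_mul_of_nonneg_left hv.le ht
          have h4 := mul_le_mul_of_nonneg_left hw.le hs
          linarith
      _ = t * moreau f x lam + s * moreau f y mu + (t + s) * (ε / 2) := by ring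
      _ ≤ t * moreau f x lam + s * moreau f y mu + ε := by rw [hts]; linarith
end

section
/- Let f : ℝ → ℝ be convex and x ∈ ℝ. Then the map λ ↦ M_f(x; λ) is differentiable on (0, ∞) with derivative d/dλ M_f(x; λ) = −(1/2)·((x − prox_f(x; λ))/λ)², where prox_f(x; λ) is the unique minimizer of v ↦ f(v) + (v − x)²/(2λ). -/
lemma moreau_eq_prox (f : ℝ → ℝ) (x l p : ℝ)
    (hp : ∀ v, f p + (p - x) ^ 2 / (2 * l) ≤ f v + (v - x) ^ 2 / (2 * l)) :
    moreau f x l = f p + (p - x) ^ 2 / (2 * l) := by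
  refine le_antisymm ?_ (le_ciInf hp)
  exact ciInf_le ⟨_, by rintro y ⟨v, rfl⟩; exact hp v⟩ p

lemma strong_growth (f : ℝ → ℝ) (hf : ConvexOn ℝ Set.univ f) (x l p : ℝ) (hl : 0 < l)
    (hp : ∀ v, f p + (p - x) ^ 2 / (2 * l) ≤ f v + (v - x) ^ 2 / (2 * l)) (v : ℝ) :
    f p + (p - x) ^ 2 / (2 * l) + (v - p) ^ 2 / (2 * l) ≤ f v + (v - x) ^ 2 / (2 * l) := by
  rcases eq_or_ne v p with rfl | hvp
  · simpa using hp v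
  have h0 : v - p ≠ 0 := sub_ne_zero.mpr hvp
  have hc : 0 < (v - p) ^ 2 / (2 * l) := by positivity
  have key : ∀ t : ℝ, 0 < t → t ≤ 1 →
      f p + (p - x) ^ 2 / (2 * l) + (1 - t) * ((v - p) ^ 2 / (2 * l)) ≤
        f v + (v - x) ^ 2 / (2 * l) := by
    intro t ht ht1
    have hw := hp ((1 - t) * p + t * v)
    have hcv := hf.2 (Set.mem_univ p) (Set.mem_univ v) (by linarith : (0:ℝ) ≤ 1 - t)
      (le_of_lt ht) (by ring)
    simp only [smul_eq_mul] at hcv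
    have h4 : f p + (p - x) ^ 2 / (2 * l) ≤
        (1 - t) * f p + t * f v +
          ((1 - t) * (p - x) ^ 2 + t * (v - x) ^ 2 - t * (1 - t) * (v - p) ^ 2) / (2 * l) := by
      have hid : ((1 - t) * p + t * v - x) ^ 2 =
          (1 - t) * (p - x) ^ 2 + t * (v - x) ^ 2 - t * (1 - t) * (v - p) ^ 2 := by ring
      calc f p + (p - x) ^ 2 / (2 * l) ≤ _ := hw
        _ ≤ _ := by rw [hid]; linarith
    have key2 : t * (f v + (v - x) ^ 2 / (2 * l)) -
        t * (f p + (p - x) ^ 2 / (2 * l) + (1 - t) * ((v - p) ^ 2 / (2 * l))) =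
        ((1 - t) * f p + t * f v +
          ((1 - t) * (p - x) ^ 2 + t * (v - x) ^ 2 - t * (1 - t) * (v - p) ^ 2) / (2 * l)) -
        (f p + (p - x) ^ 2 / (2 * l)) := by ring
    have h5 : t * (f p + (p - x) ^ 2 / (2 * l) + (1 - t) * ((v - p) ^ 2 / (2 * l))) ≤
        t * (f v + (v - x) ^ 2 / (2 * l)) := by linarith
    exact le_of_mul_le_mul_left h5 ht
  refine le_of_forall_pos_le_add fun ε hε => ?_
  rcases le_or_gt ((v - p) ^ 2 / (2 * l)) ε with h | h
  · have := key 1 one_pos le_rfl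
    simp only [sub_self, zero_mul, add_zero] at this
    linarith
  · have htpos : 0 < ε / ((v - p) ^ 2 / (2 * l)) := div_pos hε hc
    have ht1 : ε / ((v - p) ^ 2 / (2 * l)) ≤ 1 := by
      rw [div_le_one hc]; linarith
    have hk := key _ htpos ht1
    have hec : ε / ((v - p) ^ 2 / (2 * l)) * ((v - p) ^ 2 / (2 * l)) = ε :=
      div_mul_cancel₀ ε (ne_of_gt hc)
    nlinarith [hk, hec]

/-- For convex `f` and fixed `x`, the map `λ ↦ M_f(x; λ)` is differentiable on
`(0, ∞)` with derivative `−(1/2)·((x − prox_f(x; λ))/λ)²`, where `prox_f(x; λ)` is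
the unique minimizer of `v ↦ f(v) + (v − x)²/(2λ)`. -/
theorem moreau_deriv_snd (f : ℝ → ℝ) (hf : ConvexOn ℝ Set.univ f) (x : ℝ)
    (prox : ℝ → ℝ)
    (hprox : ∀ lam : ℝ, 0 < lam → ∀ v : ℝ,
      f (prox lam) + (prox lam - x) ^ 2 / (2 * lam) ≤ f v + (v - x) ^ 2 / (2 * lam)) :
    ∀ lam : ℝ, 0 < lam →
      HasDerivAt (fun l : ℝ => moreau f x l)
        (-(1 / 2) * ((x - prox lam) / lam) ^ 2) lam := by
  have hM : ∀ l, 0 < l → moreau f x l = f (prox l) + (prox l - x) ^ 2 / (2 * l) :=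
    fun l hl => moreau_eq_prox f x l (prox l) (hprox l hl)
  -- envelope upper bound
  have hBle : ∀ l m, 0 < l → 0 < m →
      moreau f x m ≤ moreau f x l + (prox l - x) ^ 2 * (1 / (2 * m) - 1 / (2 * l)) := by
    intro l m hl hm
    have h1 : moreau f x m ≤ f (prox l) + (prox l - x) ^ 2 / (2 * m) :=
      ciInf_le ⟨_, by rintro y ⟨v, rfl⟩; exact hprox m hm v⟩ (prox l)
    have h2 : (prox l - x) ^ 2 / (2 * m) =
        (prox l - x) ^ 2 / (2 * l) + (prox l - x) ^ 2 * (1 / (2 * m) - 1 / (2 * l)) := by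
      field_simp; ring
    rw [hM l hl]; linarith [h1, h2.le]
  -- distance bound from strong convexity
  have hdist : ∀ l m, 0 < l → 0 < m →
      (prox m - prox l) ^ 2 / (2 * l) ≤
        ((prox l - x) ^ 2 - (prox m - x) ^ 2) * (1 / (2 * m) - 1 / (2 * l)) := by
    intro l m hl hm
    have h1 := strong_growth f hf x l (prox l) hl (hprox l hl) (prox m)
    have h2 : f (prox m) + (prox m - x) ^ 2 / (2 * l) =
        moreau f x m + (prox m - x) ^ 2 * (1 / (2 * l) - 1 / (2 * m)) := by
      rw [hM m hm]; field_simp; ring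
    have h3 := hBle l m hl hm
    rw [← hM l hl] at h1
    nlinarith [h1, h2.le, h2.ge, h3]
  intro lam hlam
  set B := |prox lam - x| with hBdef
  -- Lipschitz-type bound for prox near lam
  have hlip : ∀ m, 0 < m → |1 / (2 * m) - 1 / (2 * lam)| ≤ 1 / (4 * lam) →
      |prox m - prox lam| ≤ (8 * lam * B) * |1 / (2 * m) - 1 / (2 * lam)| := by
    intro m hm hDle
    set d := |prox m - prox lam| with hd
    set D := |1 / (2 * m) - 1 / (2 * lam)| with hD
    have hQd : |(prox lam - x) ^ 2 - (prox m - x) ^ 2| ≤ d * (d + 2 * B) := by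
      have h1 : (prox lam - x) ^ 2 - (prox m - x) ^ 2 =
          (prox lam - prox m) * ((prox lam - x) + (prox m - x)) := by ring
      rw [h1, abs_mul]
      have h2 : |prox lam - prox m| = d := by rw [hd, abs_sub_comm]
      have h3 : |(prox lam - x) + (prox m - x)| ≤ B + (d + B) := by
        have h4 : |prox m - x| ≤ |prox m - prox lam| + |prox lam - x| := by
          calc |prox m - x| = |(prox m - prox lam) + (prox lam - x)| := by ring_nf
            _ ≤ _ := abs_add_le _ _
        rw [← hd, ← hBdef] at h4
        calc |(prox lam - x) + (prox m - x)| ≤ |prox lam - x| + |prox m - x| := abs_add_le _ _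
          _ ≤ B + (d + B) := by rw [← hBdef] at *; linarith
      rw [h2]
      have hd0 : 0 ≤ d := abs_nonneg _
      nlinarith [h3, hd0]
    have hmain := hdist lam m hlam hm
    have hub : ((prox lam - x) ^ 2 - (prox m - x) ^ 2) * (1 / (2 * m) - 1 / (2 * lam)) ≤
        d * (d + 2 * B) * D := by
      calc _ ≤ |((prox lam - x) ^ 2 - (prox m - x) ^ 2) * (1 / (2 * m) - 1 / (2 * lam))| :=
            le_abs_self _
        _ = |(prox lam - x) ^ 2 - (prox m - x) ^ 2| * D := by rw [abs_mul]
        _ ≤ d * (d + 2 * B) * D :=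
            mul_le_mul_of_nonneg_right hQd (abs_nonneg _)
    have hsq : d ^ 2 / (2 * lam) ≤ d * (d + 2 * B) * D := by
      have he : (prox m - prox lam) ^ 2 = d ^ 2 := (sq_abs _).symm
      rw [he] at hmain
      linarith
    have hsq' : d ^ 2 ≤ 2 * lam * (d * (d + 2 * B) * D) := by
      rw [div_le_iff₀ (by positivity : (0:ℝ) < 2 * lam)] at hsq
      linarith
    have h4 : D * (4 * lam) ≤ 1 := by
      rw [← le_div_iff₀ (by positivity : (0:ℝ) < 4 * lam)]
      exact hDle
    rcases eq_or_lt_of_le (abs_nonneg (prox m - prox lam)) with h0 | h0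
    · have hd0 : d = 0 := by rw [hd, ← h0]
      rw [hd0]
      have hD0 : 0 ≤ D := abs_nonneg _
      have hB0 : 0 ≤ B := abs_nonneg _
      positivity
    · rw [← hd] at h0
      have hD0 : 0 ≤ D := abs_nonneg _
      have hB0 : 0 ≤ B := abs_nonneg _
      have hdd : d * d ≤ (8 * lam * B * D) * d := by
        nlinarith [hsq', mul_le_mul_of_nonneg_right h4 (sq_nonneg d)]
      exact le_of_mul_le_mul_right hdd h0
  -- limit of the scaled difference 1/(2m)-1/(2lam)
  have hscont : ContinuousAt (fun m : ℝ => 1 / (2 * m) - 1 / (2 * lam)) lam := by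
    have : ContinuousAt (fun m : ℝ => 1 / (2 * m)) lam :=
      ContinuousAt.div continuousAt_const (by fun_prop) (by positivity)
    exact this.sub continuousAt_const
  have hDto : Filter.Tendsto (fun m : ℝ => |1 / (2 * m) - 1 / (2 * lam)|)
      (nhdsWithin lam {lam}ᶜ) (nhds 0) := by
    have h1 : Filter.Tendsto (fun m : ℝ => |1 / (2 * m) - 1 / (2 * lam)|)
        (nhdsWithin lam {lam}ᶜ) (nhds (|1 / (2 * lam) - 1 / (2 * lam)|)) :=
      (hscont.abs.tendsto).mono_left (nhdsWithin_le_nhds (s := {lam}ᶜ))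
    simpa using h1
  have hmpos : ∀ᶠ m in nhdsWithin lam {lam}ᶜ, 0 < m :=
    (eventually_gt_nhds hlam).filter_mono nhdsWithin_le_nhds
  have hDsmall : ∀ᶠ m in nhdsWithin lam {lam}ᶜ,
      |1 / (2 * m) - 1 / (2 * lam)| ≤ 1 / (4 * lam) := by
    filter_upwards [hDto.eventually_lt_const (by positivity : (0:ℝ) < 1 / (4 * lam))] with m hm
    exact hm.le
  -- prox m → prox lam
  have hPto : Filter.Tendsto prox (nhdsWithin lam {lam}ᶜ) (nhds (prox lam)) := by
    have h0 : Filter.Tendsto (fun m => prox m - prox lam) (nhdsWithin lam {lam}ᶜ) (nhds 0) := by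
      apply squeeze_zero_norm' (a := fun m => (8 * lam * B) * |1 / (2 * m) - 1 / (2 * lam)|)
      · filter_upwards [hmpos, hDsmall] with m hm hD
        exact hlip m hm hD
      · have := hDto.const_mul (8 * lam * B)
        simpa using this
    have := h0.add (tendsto_const_nhds (x := prox lam))
    simpa using this
  have hQto : Filter.Tendsto (fun m => (prox m - x) ^ 2) (nhdsWithin lam {lam}ᶜ)
      (nhds ((prox lam - x) ^ 2)) := (hPto.sub tendsto_const_nhds).pow 2
  -- r m
  have hrto : Filter.Tendsto (fun m : ℝ => -1 / (2 * m * lam)) (nhdsWithin lam {lam}ᶜ)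
      (nhds (-1 / (2 * lam * lam))) := by
    apply Filter.Tendsto.mono_left _ nhdsWithin_le_nhds
    exact (ContinuousAt.div continuousAt_const (by fun_prop) (by positivity)).tendsto
  rw [hasDerivAt_iff_tendsto_slope]
  -- pointwise bound on slope error
  have hslope : ∀ m, 0 < m → m ≠ lam →
      |slope (moreau f x) lam m - (prox lam - x) ^ 2 * (-1 / (2 * m * lam))| ≤
        |(prox m - x) ^ 2 - (prox lam - x) ^ 2| * |(-1 / (2 * m * lam))| := by
    intro m hm hne
    set Ql := (prox lam - x) ^ 2 with hQl
    set Qm := (prox m - x) ^ 2 with hQm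
    set r := -1 / (2 * m * lam) with hr
    have hhne : m - lam ≠ 0 := sub_ne_zero.mpr hne
    have hsr : 1 / (2 * m) - 1 / (2 * lam) = (m - lam) * r := by
      rw [hr]; field_simp; ring
    have hub : moreau f x m - moreau f x lam ≤ Ql * ((m - lam) * r) := by
      have h := hBle lam m hlam hm
      rw [hsr, ← hQl] at h
      linarith
    have hlb : Qm * ((m - lam) * r) ≤ moreau f x m - moreau f x lam := by
      have h := hBle m lam hm hlam
      have hsr2 : 1 / (2 * lam) - 1 / (2 * m) = -((m - lam) * r) := by
        rw [hr]; field_simp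
      rw [hsr2, ← hQm] at h
      linarith
    have hkey : |moreau f x m - moreau f x lam - Ql * ((m - lam) * r)| ≤
        |Qm - Ql| * |m - lam| * |r| := by
      rw [abs_le]
      constructor
      · have h1 : (Qm - Ql) * ((m - lam) * r) ≤
            moreau f x m - moreau f x lam - Ql * ((m - lam) * r) := by linarith
        have h2 : -(|Qm - Ql| * |m - lam| * |r|) ≤ (Qm - Ql) * ((m - lam) * r) := by
          have := neg_abs_le ((Qm - Ql) * ((m - lam) * r))
          rw [abs_mul, abs_mul] at this
          linarith
        linarith
      · have : moreau f x m - moreau f x lam - Ql * ((m - lam) * r) ≤ 0 := by linarith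
        have h2 : (0:ℝ) ≤ |Qm - Ql| * |m - lam| * |r| := by positivity
        linarith
    have heq : slope (moreau f x) lam m - Ql * r =
        (moreau f x m - moreau f x lam - Ql * ((m - lam) * r)) / (m - lam) := by
      rw [slope_def_field]
      field_simp
    rw [heq, abs_div]
    rw [div_le_iff₀ (abs_pos.mpr hhne)]
    calc |moreau f x m - moreau f x lam - Ql * ((m - lam) * r)| ≤
        |Qm - Ql| * |m - lam| * |r| := hkey
      _ = |Qm - Ql| * |r| * |m - lam| := by ring
  -- assemble
  have hmain : Filter.Tendsto (fun m => (prox lam - x) ^ 2 * (-1 / (2 * m * lam)))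
      (nhdsWithin lam {lam}ᶜ) (nhds ((prox lam - x) ^ 2 * (-1 / (2 * lam * lam)))) :=
    hrto.const_mul _
  have herr : Filter.Tendsto
      (fun m => slope (moreau f x) lam m - (prox lam - x) ^ 2 * (-1 / (2 * m * lam)))
      (nhdsWithin lam {lam}ᶜ) (nhds 0) := by
    apply squeeze_zero_norm'
      (a := fun m => |(prox m - x) ^ 2 - (prox lam - x) ^ 2| * |(-1 / (2 * m * lam))|)
    · filter_upwards [hmpos, self_mem_nhdsWithin] with m hm hne
      exact hslope m hm (by simpa using hne)
    · have h1 : Filter.Tendsto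
          (fun m => |(prox m - x) ^ 2 - (prox lam - x) ^ 2| * |(-1 / (2 * m * lam))|)
          (nhdsWithin lam {lam}ᶜ)
          (nhds (|(prox lam - x) ^ 2 - (prox lam - x) ^ 2| * |(-1 / (2 * lam * lam))|)) :=
        ((hQto.sub (tendsto_const_nhds (x := (prox lam - x) ^ 2))).abs).mul hrto.abs
      simpa using h1
  have hfinal := hmain.add herr
  have heq2 : (prox lam - x) ^ 2 * (-1 / (2 * lam * lam)) + 0 =
      -(1 / 2) * ((x - prox lam) / lam) ^ 2 := by
    field_simp; ring
  rw [heq2] at hfinal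
  refine hfinal.congr (fun m => by ring)
end

section
/- (Unweighted solution.) Let s > 0, π₊, π₋ ∈ (0,1) with π₊ + π₋ = 1, and δ ∈ (0,1). Define γ* := s(1 − (π₋ − π₊)²)/(1 + s²(1 − (π₋ − π₊)²)), λ* := δ/(1 − δ), b* := (π₋ − π₊)(γ*s − 1), and α* := sqrt(λ*(π₊(γ*s + b* − 1)² + π₋(γ*s − b* − 1)²) + γ*²/(1 − δ)). Then the quadruple (α*, γ*, λ*, b*) satisfies the square-loss system with parameters (s, π₊, π₋, δ, ρ = 1). -/
/-- The square-loss system in unknowns `(α, γ, λ, b)` with parameters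
`(s, π₊, π₋, δ, ρ)`. -/
def squareLossSystem (s pp pm δ ρ α γ lam b : ℝ) : Prop :=
  pp * (lam / (1 + lam)) ^ 2 * ((s * γ + b - 1) ^ 2 + α ^ 2)
      + pm * (lam / (ρ + lam)) ^ 2 * ((s * γ - b - 1) ^ 2 + α ^ 2)
    = δ * (α ^ 2 - γ ^ 2) ∧
  pp * s * (s * γ + b - 1) * (lam / (1 + lam))
      + pm * s * (s * γ - b - 1) * (lam / (ρ + lam)) = -(δ * γ) ∧
  pp * (lam / (1 + lam)) + pm * (lam / (ρ + lam)) = δ ∧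
  pp * ((s * γ + b - 1) / (1 + lam)) - pm * ((s * γ - b - 1) / (ρ + lam)) = 0

/-- Unweighted (ρ = 1) closed-form solution of the square-loss system. -/
theorem unweighted_solution
    (s pp pm δ : ℝ) (hs : 0 < s)
    (hpp : pp ∈ Set.Ioo (0 : ℝ) 1) (hpm : pm ∈ Set.Ioo (0 : ℝ) 1)
    (hsum : pp + pm = 1) (hδ : δ ∈ Set.Ioo (0 : ℝ) 1)
    (γs lams bs αs : ℝ)
    (hγ : γs = s * (1 - (pm - pp) ^ 2) / (1 + s ^ 2 * (1 - (pm - pp) ^ 2)))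
    (hlam : lams = δ / (1 - δ))
    (hb : bs = (pm - pp) * (γs * s - 1))
    (hα : αs = Real.sqrt (lams * (pp * (γs * s + bs - 1) ^ 2
        + pm * (γs * s - bs - 1) ^ 2) + γs ^ 2 / (1 - δ))) :
    squareLossSystem s pp pm δ 1 αs γs lams bs := by
  obtain ⟨hpp0, hpp1⟩ := hpp
  obtain ⟨hpm0, hpm1⟩ := hpm
  obtain ⟨hδ0, hδ1⟩ := hδ
  have h1d : (0:ℝ) < 1 - δ := by linarith
  have hq : (0:ℝ) < 1 - (pm - pp) ^ 2 := by nlinarith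
  have hden : (0:ℝ) < 1 + s ^ 2 * (1 - (pm - pp) ^ 2) := by nlinarith
  have hden' : (1:ℝ) + s ^ 2 * (1 - (pm - pp) ^ 2) ≠ 0 := ne_of_gt hden
  have hlampos : 0 < lams := by rw [hlam]; positivity
  have h1lam : (0:ℝ) < 1 + lams := by linarith
  have h1lam' : (1:ℝ) + lams ≠ 0 := ne_of_gt h1lam
  have hlameq : lams * (1 - δ) = δ := by
    rw [hlam]; field_simp
  have hfrac : lams / (1 + lams) = δ := by
    rw [div_eq_iff h1lam']; nlinarith [hlameq]
  have hγeq : γs * (1 + s ^ 2 * (1 - (pm - pp) ^ 2)) = s * (1 - (pm - pp) ^ 2) := by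
    rw [hγ, div_mul_cancel₀ _ hden']
  have hkey : s * (1 - (pm - pp) ^ 2) * (γs * s - 1) = -γs := by
    linear_combination hγeq
  have hE : 0 ≤ pp * (γs * s + bs - 1) ^ 2 + pm * (γs * s - bs - 1) ^ 2 :=
    add_nonneg (mul_nonneg hpp0.le (sq_nonneg _)) (mul_nonneg hpm0.le (sq_nonneg _))
  have harg : 0 ≤ lams * (pp * (γs * s + bs - 1) ^ 2
      + pm * (γs * s - bs - 1) ^ 2) + γs ^ 2 / (1 - δ) :=
    add_nonneg (mul_nonneg hlampos.le hE) (by positivity)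
  have hαsq : αs ^ 2 = lams * (pp * (γs * s + bs - 1) ^ 2
      + pm * (γs * s - bs - 1) ^ 2) + γs ^ 2 / (1 - δ) := by
    rw [hα, Real.sq_sqrt harg]
  have hC : γs ^ 2 / (1 - δ) * (1 - δ) = γs ^ 2 :=
    div_mul_cancel₀ _ (ne_of_gt h1d)
  have hαsq2 : αs ^ 2 * (1 - δ) = δ * (pp * (γs * s + bs - 1) ^ 2
      + pm * (γs * s - bs - 1) ^ 2) + γs ^ 2 := by
    rw [hαsq]
    linear_combination (pp * (γs * s + bs - 1) ^ 2
      + pm * (γs * s - bs - 1) ^ 2) * hlameq + hC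
  refine ⟨?_, ?_, ?_, ?_⟩
  · -- equation (a)
    rw [hfrac]
    linear_combination (δ ^ 2 * αs ^ 2) * hsum - δ * hαsq2
  · -- equation (b)
    rw [hfrac]
    linear_combination (δ * s * (s * γs - 1)) * hsum + (δ * s * (pp - pm)) * hb + δ * hkey
  · rw [hfrac]; linear_combination δ * hsum
  · -- equation (d)
    linear_combination (bs / (1 + lams)) * hsum + (1 / (1 + lams)) * hb
end

section
/- Let s > 0, π₊, π₋ ∈ (0,1) with π₊ + π₋ = 1 and π₊ ≤ π₋, and δ ∈ (0,1). Define γ* := s(1 − (π₋ − π₊)²)/(1 + s²(1 − (π₋ − π₊)²)), b* := (π₋ − π₊)(γ*s − 1), λ* := δ/(1 − δ), and α* := sqrt(λ*(π₊(γ*s + b* − 1)² + π₋(γ*s − b* − 1)²) + γ*²/(1 − δ)). Then γ*·s < 1 and b* ≤ 0, α* > 0, and consequently the worst-class error of the unweighted solution is the minority-class error: max{Q((γ*s + b*)/α*), Q((γ*s − b*)/α*)} = Q((γ*s + b*)/α*). -/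
open MeasureTheory ProbabilityTheory

/-- The Gaussian Q-function: `Q x` is the probability that a standard Gaussian exceeds `x`. -/
noncomputable def Qfun (x : ℝ) : ENNReal := gaussianReal 0 1 (Set.Ioi x)

/-- For the unweighted solution, `γ*·s < 1`, `b* ≤ 0`, `α* > 0`, and the worst-class
error is the minority-class error. -/
theorem unweighted_worst_class_error
    (s pp pm δ : ℝ) (hs : 0 < s)
    (hpp : pp ∈ Set.Ioo (0 : ℝ) 1) (hpm : pm ∈ Set.Ioo (0 : ℝ) 1)
    (hsum : pp + pm = 1) (hple : pp ≤ pm) (hδ : δ ∈ Set.Ioo (0 : ℝ) 1)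
    (γs bs lams αs : ℝ)
    (hγ : γs = s * (1 - (pm - pp) ^ 2) / (1 + s ^ 2 * (1 - (pm - pp) ^ 2)))
    (hb : bs = (pm - pp) * (γs * s - 1))
    (hlam : lams = δ / (1 - δ))
    (hα : αs = Real.sqrt (lams * (pp * (γs * s + bs - 1) ^ 2
        + pm * (γs * s - bs - 1) ^ 2) + γs ^ 2 / (1 - δ))) :
    γs * s < 1 ∧ bs ≤ 0 ∧ 0 < αs ∧
    max (Qfun ((γs * s + bs) / αs)) (Qfun ((γs * s - bs) / αs))
      = Qfun ((γs * s + bs) / αs) := by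
  have hd0 : 0 ≤ pm - pp := by linarith
  have hd2 : 0 < 1 - (pm - pp) ^ 2 := by nlinarith [hpp.1, hpm.2]
  have hden : 0 < 1 + s ^ 2 * (1 - (pm - pp) ^ 2) := by positivity
  have hγpos : 0 < γs := by rw [hγ]; exact div_pos (by positivity) hden
  have hlt : γs * s < 1 := by
    rw [hγ, div_mul_eq_mul_div, div_lt_one hden]; nlinarith
  have hb0 : bs ≤ 0 := by
    rw [hb]; exact mul_nonpos_of_nonneg_of_nonpos hd0 (by linarith)
  have h1δ : 0 < 1 - δ := by linarith [hδ.2]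
  have hαpos : 0 < αs := by
    rw [hα]
    apply Real.sqrt_pos.mpr
    have h1 : 0 < γs ^ 2 / (1 - δ) := div_pos (pow_pos hγpos 2) h1δ
    have h2 : 0 ≤ lams * (pp * (γs * s + bs - 1) ^ 2 + pm * (γs * s - bs - 1) ^ 2) := by
      apply mul_nonneg
      · rw [hlam]; exact div_nonneg hδ.1.le h1δ.le
      · have := hpp.1.le; have := hpm.1.le; positivity
    linarith
  refine ⟨hlt, hb0, hαpos, ?_⟩
  apply max_eq_left
  apply measure_mono
  apply Set.Ioi_subset_Ioi
  gcongr; linarith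
end

section
/- (Equal-error solution.) Let s > 0, π₊, π₋ ∈ (0,1) with π₊ + π₋ = 1 and π₊ ≤ π₋, and let 0 < δ < 2π₊. Define ρ̃ := π₋/π₊ + (π₋/π₊ − 1)·δ/(2π₊ − δ), Δ := δ/(4π₊) + δ/(4π₋), γ* := s/(1 + s²), λ* := δ/(2π₊ − δ), and α* := sqrt((Δ/(1 − Δ))·(γ*s − 1)² + γ*²/(1 − Δ)). Then Δ ∈ (0,1), λ* > 0, and the quadruple (α*, γ*, λ*, b = 0) satisfies the square-loss system with parameters (s, π₊, π₋, δ, ρ = ρ̃). -/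
/-- Equal-error solution: with `ρ = ρ̃`, the quadruple `(α*, γ*, λ*, b = 0)`
solves the square-loss system. -/
theorem equal_error_solution
    (s pp pm δ : ℝ) (hs : 0 < s)
    (hpp : pp ∈ Set.Ioo (0 : ℝ) 1) (hpm : pm ∈ Set.Ioo (0 : ℝ) 1)
    (hsum : pp + pm = 1) (hple : pp ≤ pm)
    (hδ0 : 0 < δ) (hδ : δ < 2 * pp)
    (ρt Δ γs lams αs : ℝ)
    (hρ : ρt = pm / pp + (pm / pp - 1) * (δ / (2 * pp - δ)))
    (hΔ : Δ = δ / (4 * pp) + δ / (4 * pm))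
    (hγ : γs = s / (1 + s ^ 2))
    (hlam : lams = δ / (2 * pp - δ))
    (hα : αs = Real.sqrt ((Δ / (1 - Δ)) * (γs * s - 1) ^ 2 + γs ^ 2 / (1 - Δ))) :
    Δ ∈ Set.Ioo (0 : ℝ) 1 ∧ 0 < lams ∧
    squareLossSystem s pp pm δ ρt αs γs lams 0 := by
  obtain ⟨hpp0, hpp1⟩ := hpp
  obtain ⟨hpm0, hpm1⟩ := hpm
  have h2p : 0 < 2 * pp - δ := by linarith
  have hΔ0 : 0 < Δ := by
    rw [hΔ]; positivity
  have hΔpp : δ / (4 * pp) < 1 / 2 := by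
    rw [div_lt_div_iff₀ (by linarith) (by norm_num)]; linarith
  have hΔpm : δ / (4 * pm) < 1 / 2 := by
    rw [div_lt_div_iff₀ (by linarith) (by norm_num)]; nlinarith
  have hΔ1 : Δ < 1 := by rw [hΔ]; linarith
  have h1Δ : 0 < 1 - Δ := by linarith
  have hlam0 : 0 < lams := by rw [hlam]; positivity
  have hs2 : (0:ℝ) < 1 + s ^ 2 := by positivity
  -- key fractions
  have h1l : 1 + lams = 2 * pp / (2 * pp - δ) := by
    rw [hlam]; field_simp; ring
  have h1lpos : 0 < 1 + lams := by linarith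
  have h1lne : (1 + lams) ≠ 0 := ne_of_gt h1lpos
  have hfl : lams / (1 + lams) = δ / (2 * pp) := by
    rw [h1l, hlam]
    rw [div_div_div_eq]
    rw [div_eq_div_iff (by positivity) (by positivity)]
    ring
  have hρl : ρt + lams = (pm / pp) * (1 + lams) := by
    rw [hρ, hlam]; field_simp; ring
  have hρlpos : 0 < ρt + lams := by
    rw [hρl]; positivity
  have hρlne : (ρt + lams) ≠ 0 := ne_of_gt hρlpos
  have hfr : lams / (ρt + lams) = δ / (2 * pm) := by
    rw [hρl, h1l, hlam]
    field_simp
  -- α squared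
  have hA0 : 0 ≤ (Δ / (1 - Δ)) * (γs * s - 1) ^ 2 + γs ^ 2 / (1 - Δ) := by
    have := hΔ0.le
    positivity
  have hα2 : αs ^ 2 = (Δ / (1 - Δ)) * (γs * s - 1) ^ 2 + γs ^ 2 / (1 - Δ) := by
    rw [hα, Real.sq_sqrt hA0]
  refine ⟨⟨hΔ0, hΔ1⟩, hlam0, ?_, ?_, ?_, ?_⟩
  · -- equation (a)
    have key : αs ^ 2 * (1 - Δ) = Δ * (s * γs - 1) ^ 2 + γs ^ 2 := by
      rw [hα2]; field_simp
    rw [hfl, hfr]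
    have step : pp * (δ / (2 * pp)) ^ 2 * ((s * γs + 0 - 1) ^ 2 + αs ^ 2)
        + pm * (δ / (2 * pm)) ^ 2 * ((s * γs - 0 - 1) ^ 2 + αs ^ 2)
        = δ * Δ * ((s * γs - 1) ^ 2 + αs ^ 2) := by
      rw [hΔ]; field_simp; ring
    rw [step]
    linear_combination (-δ) * key
  · -- equation (b)
    rw [hfl, hfr, hγ]
    field_simp
    ring
  · -- equation (c)
    rw [hfl, hfr]
    field_simp
    ring
  · -- equation (d)
    rw [hρl]
    have : pm * ((s * γs - 0 - 1) / (pm / pp * (1 + lams))) =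
        pp * ((s * γs - 0 - 1) / (1 + lams)) := by
      rw [div_mul_eq_div_div]
      field_simp
    rw [this]
    ring_nf
end

section
/- (Worst-class error of the equal-error solution.) Let s > 0, π₊, π₋ ∈ (0,1) with π₊ + π₋ = 1 and π₊ ≤ π₋, and let 0 < δ < 2π₊. Define Δ := δ/(4π₊) + δ/(4π₋), γ* := s/(1 + s²), and α* := sqrt((Δ/(1 − Δ))·(γ*s − 1)² + γ*²/(1 − Δ)). Then Δ ∈ (0,1), α* > 0, and γ*·s/α* = s²·sqrt(1 − Δ)/sqrt(Δ + s²); consequently the worst-class error of the equal-error solution equals Q(s²·sqrt(1 − Δ)/sqrt(Δ + s²)). -/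
open MeasureTheory ProbabilityTheory

/-- Worst-class error of the equal-error solution equals
`Q(s²·√(1 − Δ)/√(Δ + s²))`. -/
theorem equal_error_worst_class_error
    (s pp pm δ : ℝ) (hs : 0 < s)
    (hpp : pp ∈ Set.Ioo (0 : ℝ) 1) (hpm : pm ∈ Set.Ioo (0 : ℝ) 1)
    (hsum : pp + pm = 1) (hple : pp ≤ pm)
    (hδ0 : 0 < δ) (hδ : δ < 2 * pp)
    (Δ γs αs : ℝ)
    (hΔ : Δ = δ / (4 * pp) + δ / (4 * pm))
    (hγ : γs = s / (1 + s ^ 2))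
    (hα : αs = Real.sqrt ((Δ / (1 - Δ)) * (γs * s - 1) ^ 2 + γs ^ 2 / (1 - Δ))) :
    Δ ∈ Set.Ioo (0 : ℝ) 1 ∧ 0 < αs ∧
    γs * s / αs = s ^ 2 * Real.sqrt (1 - Δ) / Real.sqrt (Δ + s ^ 2) ∧
    max (Qfun ((γs * s + 0) / αs)) (Qfun ((γs * s - 0) / αs))
      = Qfun (s ^ 2 * Real.sqrt (1 - Δ) / Real.sqrt (Δ + s ^ 2)) := by
  obtain ⟨hpp0, hpp1⟩ := hpp
  obtain ⟨hpm0, hpm1⟩ := hpm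
  have hΔ0 : 0 < Δ := by
    rw [hΔ]; positivity
  have h1 : δ / (4 * pp) < 1 / 2 := by
    rw [div_lt_div_iff₀ (by positivity) (by norm_num)]; linarith
  have h2 : δ / (4 * pm) < 1 / 2 := by
    rw [div_lt_div_iff₀ (by positivity) (by norm_num)]; nlinarith
  have hΔ1 : Δ < 1 := by rw [hΔ]; linarith
  have hB : (0:ℝ) < 1 - Δ := by linarith
  have hA : (0:ℝ) < Δ + s ^ 2 := by positivity
  have h1s : (0:ℝ) < 1 + s ^ 2 := by positivity
  have hinner : (Δ / (1 - Δ)) * (γs * s - 1) ^ 2 + γs ^ 2 / (1 - Δ)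
      = (Δ + s ^ 2) / ((1 - Δ) * (1 + s ^ 2) ^ 2) := by
    subst hγ
    field_simp
    ring
  have hαval : αs = Real.sqrt (Δ + s ^ 2) / (Real.sqrt (1 - Δ) * (1 + s ^ 2)) := by
    rw [hα, hinner, Real.sqrt_div hA.le, Real.sqrt_mul hB.le, Real.sqrt_sq h1s.le]
  have hsA : (0:ℝ) < Real.sqrt (Δ + s ^ 2) := Real.sqrt_pos.mpr hA
  have hsB : (0:ℝ) < Real.sqrt (1 - Δ) := Real.sqrt_pos.mpr hB
  have hαpos : 0 < αs := by rw [hαval]; positivity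
  have hkey : γs * s / αs = s ^ 2 * Real.sqrt (1 - Δ) / Real.sqrt (Δ + s ^ 2) := by
    rw [hγ, hαval]
    field_simp
  refine ⟨⟨hΔ0, hΔ1⟩, hαpos, hkey, ?_⟩
  rw [add_zero, sub_zero, hkey, max_self]
end

section
/- (Downsampling solution.) Let s > 0, π₊ ∈ (0, 1/2], and δ > 0 with δ̃ := δ/(2π₊) ∈ (0,1). Define γ := s/(1 + s²), λ := δ̃/(1 − δ̃), b := 0, and α := sqrt(λ·(γs − 1)² + γ²/(1 − δ̃)). Then the quadruple (α, γ, λ, b) satisfies the square-loss system with parameters (s, π₊ = 1/2, π₋ = 1/2, δ̃, ρ = 1); i.e., the downsampled problem is the unweighted balanced problem at the inflated overparameterization ratio δ̃ = δ/(2π₊). -/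
/-- Downsampling: the downsampled problem is the unweighted balanced problem at the
inflated overparameterization ratio `δ̃ = δ/(2π₊)`. -/
theorem downsampling_solution
    (s pp δ δt : ℝ) (hs : 0 < s)
    (hpp : pp ∈ Set.Ioc (0 : ℝ) (1 / 2)) (hδ0 : 0 < δ)
    (hδt : δt = δ / (2 * pp)) (hδt1 : δt ∈ Set.Ioo (0 : ℝ) 1)
    (γ lam b α : ℝ)
    (hγ : γ = s / (1 + s ^ 2))
    (hlam : lam = δt / (1 - δt))
    (hb : b = 0)
    (hα : α = Real.sqrt (lam * (γ * s - 1) ^ 2 + γ ^ 2 / (1 - δt))) :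
    squareLossSystem s (1 / 2) (1 / 2) δt 1 α γ lam b := by
  obtain ⟨hδt0, hδt1'⟩ := hδt1
  have h1 : (0:ℝ) < 1 - δt := by linarith
  have hlam0 : 0 < lam := by rw [hlam]; positivity
  have harg : 0 ≤ lam * (γ * s - 1) ^ 2 + γ ^ 2 / (1 - δt) := by positivity
  have hα2 : α ^ 2 = lam * (γ * s - 1) ^ 2 + γ ^ 2 / (1 - δt) := by
    rw [hα, Real.sq_sqrt harg]
  have hfrac : lam / (1 + lam) = δt := by
    rw [hlam]; field_simp
    ring
  have hden : (1 : ℝ) + lam ≠ 0 := by linarith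
  have hs2 : (1:ℝ) + s ^ 2 ≠ 0 := by positivity
  subst hb
  refine ⟨?_, ?_, ?_, ?_⟩
  · have : (1:ℝ)/2 * (lam/(1+lam))^2 * ((s*γ+0-1)^2 + α^2)
        + 1/2 * (lam/(1+lam))^2 * ((s*γ-0-1)^2 + α^2)
        = δt^2 * ((s*γ-1)^2 + α^2) := by rw [hfrac]; ring
    rw [this, hα2, hlam, hγ]
    field_simp
    ring
  · rw [hfrac, hγ]
    field_simp
    ring
  · rw [hfrac]; ring
  · ring
end

section
/- (Optimally weighted ERM strictly outperforms downsampling.) Let s > 0, π₊ ∈ (0, 1/2), π₋ := 1 − π₊, and 0 < δ < 2π₊. Define Δ := δ/(4π₊) + δ/(4π₋) and δ̃ := δ/(2π₊). Then 0 < Δ < δ̃ < 1, and s²·sqrt(1 − Δ)/sqrt(Δ + s²) > s²·sqrt(1 − δ̃)/sqrt(δ̃ + s²); consequently Q(s²·sqrt(1 − Δ)/sqrt(Δ + s²)) < Q(s²·sqrt(1 − δ̃)/sqrt(δ̃ + s²)), i.e., the worst-class error of optimally weighted ERM is strictly smaller than the worst-class error of downsampling. -/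
open MeasureTheory ProbabilityTheory

lemma Qfun_strictAnti {a b : ℝ} (h : a < b) : Qfun b < Qfun a := by
  have hv : (1 : NNReal) ≠ 0 := one_ne_zero
  have hpos : gaussianReal 0 1 (Set.Ioc a b) ≠ 0 := by
    intro h0
    have hvol : (volume : Measure ℝ) (Set.Ioc a b) = 0 :=
      (gaussianReal_absolutelyContinuous' 0 hv) h0
    rw [Real.volume_Ioc] at hvol
    simp only [ENNReal.ofReal_eq_zero] at hvol
    linarith
  have hunion : Set.Ioc a b ∪ Set.Ioi b = Set.Ioi a := Set.Ioc_union_Ioi_eq_Ioi h.le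
  have hd : Disjoint (Set.Ioc a b) (Set.Ioi b) := Set.Ioc_disjoint_Ioi le_rfl
  have hm : gaussianReal 0 1 (Set.Ioi a)
      = gaussianReal 0 1 (Set.Ioc a b) + gaussianReal 0 1 (Set.Ioi b) := by
    rw [← hunion, measure_union hd measurableSet_Ioi]
  have hfin : Qfun b ≠ ⊤ := (measure_lt_top _ _).ne
  unfold Qfun at *
  rw [hm, add_comm]
  exact ENNReal.lt_add_right hfin hpos

/-- Optimally weighted ERM strictly outperforms downsampling: `0 < Δ < δ̃ < 1` and the
worst-class error of the equal-error weighted solution is strictly smaller than that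
of the downsampled solution. -/
theorem werm_beats_downsampling
    (s pp pm δ : ℝ) (hs : 0 < s)
    (hpp : pp ∈ Set.Ioo (0 : ℝ) (1 / 2)) (hpm : pm = 1 - pp)
    (hδ0 : 0 < δ) (hδ : δ < 2 * pp)
    (Δ δt : ℝ)
    (hΔ : Δ = δ / (4 * pp) + δ / (4 * pm))
    (hδt : δt = δ / (2 * pp)) :
    0 < Δ ∧ Δ < δt ∧ δt < 1 ∧
    s ^ 2 * Real.sqrt (1 - Δ) / Real.sqrt (Δ + s ^ 2)
      > s ^ 2 * Real.sqrt (1 - δt) / Real.sqrt (δt + s ^ 2) ∧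
    Qfun (s ^ 2 * Real.sqrt (1 - Δ) / Real.sqrt (Δ + s ^ 2))
      < Qfun (s ^ 2 * Real.sqrt (1 - δt) / Real.sqrt (δt + s ^ 2)) := by
  obtain ⟨hpp0, hpp2⟩ := hpp
  have hpm0 : 0 < pm := by rw [hpm]; linarith
  have hpmpp : pp < pm := by rw [hpm]; linarith
  have hΔ0 : 0 < Δ := by
    rw [hΔ]; positivity
  have hΔδt : Δ < δt := by
    rw [hΔ, hδt]
    have h2 : δ / (4 * pm) < δ / (4 * pp) := by
      apply div_lt_div_of_pos_left hδ0 (by positivity)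
      linarith
    have h3 : δ / (2 * pp) = δ / (4 * pp) + δ / (4 * pp) := by
      field_simp; ring
    linarith
  have hδt1 : δt < 1 := by
    rw [hδt]
    rw [div_lt_one (by positivity)]
    linarith
  have hΔ1 : Δ < 1 := hΔδt.trans hδt1
  -- the function inequality
  have hsq1 : Real.sqrt (1 - δt) < Real.sqrt (1 - Δ) := by
    apply Real.sqrt_lt_sqrt (by linarith) (by linarith)
  have hsq2 : Real.sqrt (Δ + s ^ 2) < Real.sqrt (δt + s ^ 2) := by
    apply Real.sqrt_lt_sqrt (by positivity) (by linarith)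
  have hden1 : 0 < Real.sqrt (Δ + s ^ 2) := Real.sqrt_pos.mpr (by positivity)
  have hnum1 : 0 ≤ Real.sqrt (1 - δt) := Real.sqrt_nonneg _
  have hlt : s ^ 2 * Real.sqrt (1 - δt) / Real.sqrt (δt + s ^ 2)
      < s ^ 2 * Real.sqrt (1 - Δ) / Real.sqrt (Δ + s ^ 2) := by
    exact div_lt_div₀ (mul_lt_mul_of_pos_left hsq1 (by positivity)) hsq2.le (by positivity) hden1
  exact ⟨hΔ0, hΔδt, hδt1, hlt, Qfun_strictAnti hlt⟩
end

section
/- (When weighting beats no weighting.) Let s > 0, π₊ ∈ (0, 1/2), π₋ := 1 − π₊, and 0 < δ < 2π₊ (with δ < 1). Define the unweighted solution γ* := s(1 − (π₋ − π₊)²)/(1 + s²(1 − (π₋ − π₊)²)), b* := (π₋ − π₊)(γ*s − 1), λ* := δ/(1 − δ), α* := sqrt(λ*(π₊(γ*s + b* − 1)² + π₋(γ*s − b* − 1)²) + γ*²/(1 − δ)), and the equal-error solution Δ := δ/(4π₊) + δ/(4π₋), γ̃ := s/(1 + s²), α̃ := sqrt((Δ/(1 − Δ))·(γ̃s − 1)²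 + γ̃²/(1 − Δ)). Then γ̃·s/α̃ ≥ (γ*s + b*)/α* (equivalently, the equal-error weighted worst-class error is at most the unweighted worst-class error) if and only if s² ≤ (1 − 2π₊) / (2·(2π₊(1 − π₊) − sqrt((1 − π₊)π₊(4(1 − π₊)π₊ − δ)/(1 − δ)))). -/
private lemma aux_dM (pp δ : ℝ) (h0 : 0 < pp) (h : pp < 1/2) (hδ : δ < 2*pp) :
    δ < 4*pp*(1-pp) := by nlinarith

private lemma aux_c2 (pp δ : ℝ) (h0 : 0 < pp) (h : pp < 1/2) (hδ0 : 0 < δ) (hδ1 : δ < 1) :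
    4*pp*(1-pp)*(4*pp*(1-pp)-δ)/(1-δ) < (4*pp*(1-pp))^2 := by
  rw [div_lt_iff₀ (by linarith)]
  nlinarith [mul_pos (mul_pos (by nlinarith : (0:ℝ) < 4*pp*(1-pp)) hδ0)
    (by nlinarith [sq_nonneg (1-2*pp)] : (0:ℝ) < 1 - 4*pp*(1-pp))]

private lemma aux_lin (x y z w : ℝ) : x*y - w ≤ x*z ↔ x*(y-z) ≤ w := by
  rw [mul_sub]; constructor <;> intro h <;> linarith

set_option maxHeartbeats 1000000 in
/-- When weighting beats no weighting: the equal-error weighted solution achieves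
worst-class error at most that of the unweighted solution iff the class
separation satisfies the stated bound. -/
theorem weighting_beats_unweighted_iff
    (s pp pm δ : ℝ) (hs : 0 < s)
    (hpp : pp ∈ Set.Ioo (0 : ℝ) (1 / 2)) (hpm : pm = 1 - pp)
    (hδ0 : 0 < δ) (hδ : δ < 2 * pp) (hδ1 : δ < 1)
    (γs bs lams αs Δ γt αt : ℝ)
    (hγs : γs = s * (1 - (pm - pp) ^ 2) / (1 + s ^ 2 * (1 - (pm - pp) ^ 2)))
    (hbs : bs = (pm - pp) * (γs * s - 1))
    (hlams : lams = δ / (1 - δ))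
    (hαs : αs = Real.sqrt (lams * (pp * (γs * s + bs - 1) ^ 2
        + pm * (γs * s - bs - 1) ^ 2) + γs ^ 2 / (1 - δ)))
    (hΔ : Δ = δ / (4 * pp) + δ / (4 * pm))
    (hγt : γt = s / (1 + s ^ 2))
    (hαt : αt = Real.sqrt ((Δ / (1 - Δ)) * (γt * s - 1) ^ 2 + γt ^ 2 / (1 - Δ))) :
    γt * s / αt ≥ (γs * s + bs) / αs ↔
      s ^ 2 ≤ (1 - 2 * pp) /
        (2 * (2 * pp * (1 - pp)
          - Real.sqrt ((1 - pp) * pp * (4 * (1 - pp) * pp - δ) / (1 - δ)))) := by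
  obtain ⟨hpp0, hpph⟩ := hpp
  subst hpm
  have h1pp : (0:ℝ) < 1 - pp := by linarith
  have hM0 : (0:ℝ) < 4 * pp * (1 - pp) := by positivity
  have hδM : δ < 4 * pp * (1 - pp) := aux_dM pp δ hpp0 hpph hδ
  have h1δ : (0:ℝ) < 1 - δ := by linarith
  have hP : (0:ℝ) < δ + s ^ 2 * (4 * pp * (1 - pp)) := by positivity
  have hs1 : (0:ℝ) < 1 + s ^ 2 := by positivity
  have hsm1 : (0:ℝ) < 1 + s ^ 2 * (4 * pp * (1 - pp)) := by positivity
  have hMδ' : 4 * pp * (1 - pp) - δ ≠ 0 := by linarith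
  have h1δ' : (1:ℝ) - δ ≠ 0 := ne_of_gt h1δ
  have hpp' : pp ≠ 0 := ne_of_gt hpp0
  have h1pp' : (1:ℝ) - pp ≠ 0 := ne_of_gt h1pp
  have hs1' : (1:ℝ) + s ^ 2 ≠ 0 := ne_of_gt hs1
  have hsm1' : (1:ℝ) + s ^ 2 * (4 * pp * (1 - pp)) ≠ 0 := ne_of_gt hsm1
  have hden2 : (1:ℝ) + s ^ 2 * (1 - (1 - pp - pp) ^ 2) ≠ 0 := by
    have h : (1:ℝ) + s ^ 2 * (1 - (1 - pp - pp) ^ 2)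
        = 1 + s ^ 2 * (4 * pp * (1 - pp)) := by ring
    rw [h]; exact hsm1'
  set E1 : ℝ := (δ + s ^ 2 * (4 * pp * (1 - pp))) / (4 * pp * (1 - pp) - δ) with hE1
  set E2 : ℝ := 4 * pp * (1 - pp) * (δ + s ^ 2 * (4 * pp * (1 - pp))) / (1 - δ) with hE2
  have hE1p : 0 < E1 := div_pos hP (by linarith)
  have hE2p : 0 < E2 := div_pos (by positivity) h1δ
  have hsE1 : 0 < Real.sqrt E1 := Real.sqrt_pos.mpr hE1p
  have hsE2 : 0 < Real.sqrt E2 := Real.sqrt_pos.mpr hE2p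
  -- numerator of unweighted ratio
  have hnum : γs * s + bs
      = (s ^ 2 * (4 * pp * (1 - pp)) - (1 - 2 * pp)) / (1 + s ^ 2 * (4 * pp * (1 - pp))) := by
    rw [hbs, hγs]; field_simp; ring
  -- αs
  have hargs : lams * (pp * (γs * s + bs - 1) ^ 2 + (1 - pp) * (γs * s - bs - 1) ^ 2)
      + γs ^ 2 / (1 - δ) = E2 / (1 + s ^ 2 * (4 * pp * (1 - pp))) ^ 2 := by
    rw [hlams, hbs, hγs, hE2]; field_simp; ring
  have hαsv : αs = Real.sqrt E2 / (1 + s ^ 2 * (4 * pp * (1 - pp))) := by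
    rw [hαs, hargs, Real.sqrt_div hE2p.le, Real.sqrt_sq hsm1.le]
  -- αt
  have hargt : Δ / (1 - Δ) * (γt * s - 1) ^ 2 + γt ^ 2 / (1 - Δ)
      = E1 / (1 + s ^ 2) ^ 2 := by
    have h1Δ : 1 - Δ = (4 * pp * (1 - pp) - δ) / (4 * pp * (1 - pp)) := by
      rw [hΔ]; field_simp; ring
    rw [h1Δ, hΔ, hγt, hE1]; field_simp; ring
  have hαtv : αt = Real.sqrt E1 / (1 + s ^ 2) := by
    rw [hαt, hargt, Real.sqrt_div hE1p.le, Real.sqrt_sq hs1.le]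
  -- the ratios
  have hA : γt * s / αt = s ^ 2 / Real.sqrt E1 := by
    rw [hαtv, hγt]; field_simp
  have hB : (γs * s + bs) / αs
      = (s ^ 2 * (4 * pp * (1 - pp)) - (1 - 2 * pp)) / Real.sqrt E2 := by
    rw [hαsv, hnum]; field_simp
  rw [ge_iff_le, hA, hB, div_le_div_iff₀ hsE2 hsE1]
  -- relate sqrt E2 and sqrt E1
  set c : ℝ := Real.sqrt (4 * pp * (1 - pp) * (4 * pp * (1 - pp) - δ) / (1 - δ)) with hc
  have hXnn : (0:ℝ) ≤ 4 * pp * (1 - pp) * (4 * pp * (1 - pp) - δ) / (1 - δ) :=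
    div_nonneg (by nlinarith) h1δ.le
  have hc0 : 0 ≤ c := Real.sqrt_nonneg _
  have hc2 : c ^ 2 = 4 * pp * (1 - pp) * (4 * pp * (1 - pp) - δ) / (1 - δ) :=
    Real.sq_sqrt hXnn
  have hE2c : Real.sqrt E2 = c * Real.sqrt E1 := by
    have h : E2 = (4 * pp * (1 - pp) * (4 * pp * (1 - pp) - δ) / (1 - δ)) * E1 := by
      rw [hE2, hE1]; field_simp
    rw [h, Real.sqrt_mul hXnn, hc]
  have hcM : c < 4 * pp * (1 - pp) := by
    have h2 : c ^ 2 < (4 * pp * (1 - pp)) ^ 2 := by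
      rw [hc2]; exact aux_c2 pp δ hpp0 hpph hδ0 hδ1
    exact lt_of_pow_lt_pow_left₀ 2 hM0.le h2
  have hMc : (0:ℝ) < 4 * pp * (1 - pp) - c := by linarith
  -- rewrite the RHS sqrt
  have hsq : Real.sqrt ((1 - pp) * pp * (4 * (1 - pp) * pp - δ) / (1 - δ)) = c / 2 := by
    have h : (1 - pp) * pp * (4 * (1 - pp) * pp - δ) / (1 - δ)
        = (4 * pp * (1 - pp) * (4 * pp * (1 - pp) - δ) / (1 - δ)) / 2 ^ 2 := by ring
    rw [h, Real.sqrt_div hXnn, Real.sqrt_sq (by norm_num : (0:ℝ) ≤ 2), hc]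
  rw [hsq, show 2 * (2 * pp * (1 - pp) - c / 2) = 4 * pp * (1 - pp) - c by ring,
    le_div_iff₀ hMc, hE2c]
  rw [show s ^ 2 * (c * Real.sqrt E1) = (s ^ 2 * c) * Real.sqrt E1 by ring,
    mul_le_mul_iff_of_pos_right hsE1]
  exact aux_lin (s ^ 2) (4 * pp * (1 - pp)) c (1 - 2 * pp)
end
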